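/- arXiv:0901.1627 — 4 statements merged into one kernel-verified Lean document; each statement's English description precedes it below -/
import Mathlib

section
/- Let E be a Grothendieck topos with the weak factorization system (Mono, Mono^□), where Mono is the class of monomorphisms. A (functorial) cylinder (Cyl, γ, σ) for (Mono, Mono^□) is cartesian if and only if it satisfies condition DH1: the functor Cyl preserves monomorphisms and preserves all colimits. -/
/-!
Common definitions: weak factorization systems, functorial cylinders,
Cisinski's construction, localizers, locally presentable categories.
-/

universe w v u u₁ u₂ u₃

open CategoryTheory Limits Opposite

namespace Paper

variable {K : Type u} [Category.{v} K]

/-- The class of maps with the right lifting property against all maps in `H`. -/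
def Rlp (H : MorphismProperty K) : MorphismProperty K :=
  fun _ _ g => ∀ ⦃A B : K⦄ (h : A ⟶ B), H h → HasLiftingProperty h g

/-- The class of maps with the left lifting property against all maps in `H`. -/
def Llp (H : MorphismProperty K) : MorphismProperty K :=
  fun _ _ f => ∀ ⦃A B : K⦄ (h : A ⟶ B), H h → HasLiftingProperty f h

/-- Weak factorization system. -/
structure IsWFS (L R : MorphismProperty K) : Prop where
  llp_eq : L = Llp R
  rlp_eq : R = Rlp L
  factor : ∀ ⦃X Y : K⦄ (f : X ⟶ Y),
    ∃ (Z : K) (l : X ⟶ Z) (r : Z ⟶ Y), L l ∧ R r ∧ l ≫ r = f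

/-- A class of maps is essentially a (small) set. -/
def IsSmallClass (I : MorphismProperty K) : Prop :=
  Small.{v} (Σ (X : K) (Y : K), { f : X ⟶ Y // I f })

/-- Every object is cofibrant. -/
def AllCofibrant [HasInitial K] (L : MorphismProperty K) : Prop :=
  ∀ X : K, L (initial.to X)

/-- `L` is cofibrantly generated (by a set). -/
def CofGenerated (L : MorphismProperty K) : Prop :=
  ∃ I : MorphismProperty K, IsSmallClass I ∧ L = Llp (Rlp I)

/-- intersection of two classes of maps -/
def interClass (A B : MorphismProperty K) : MorphismProperty K := fun _ _ f => A f ∧ B f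

/-- closed under retracts in the arrow category -/
def RetractClosed (W : MorphismProperty K) : Prop :=
  ∀ ⦃f g : Arrow K⦄ (i : f ⟶ g) (r : g ⟶ f), i ≫ r = 𝟙 f → W g.hom → W f.hom

/-- the 2-out-of-3 property -/
def TwoOutOfThree (W : MorphismProperty K) : Prop :=
  (∀ ⦃X Y Z : K⦄ (f : X ⟶ Y) (g : Y ⟶ Z), W f → W g → W (f ≫ g)) ∧
  (∀ ⦃X Y Z : K⦄ (f : X ⟶ Y) (g : Y ⟶ Z), W f → W (f ≫ g) → W g) ∧
  (∀ ⦃X Y Z : K⦄ (f : X ⟶ Y) (g : Y ⟶ Z), W g → W (f ≫ g) → W f)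

/-- Quillen model structure, given by cofibrations, weak equivalences and fibrations. -/
structure IsModelStructure (Cof W Fib : MorphismProperty K) : Prop where
  retractClosed : RetractClosed W
  twoOutOfThree : TwoOutOfThree W
  wfs₁ : IsWFS Cof (interClass W Fib)
  wfs₂ : IsWFS (interClass Cof W) Fib

/-- the functor `X ↦ X + X` -/
@[simps] noncomputable def double (K : Type u) [Category.{v} K] [HasBinaryCoproducts K] :
    K ⥤ K where
  obj X := X ⨿ X
  map f := coprod.map f f

/-- A functorial cylinder: a functor `C` together with natural transformations
`γ : X + X ⟶ C X` and `σ : C X ⟶ X` factoring the codiagonal. -/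
structure Cylinder (K : Type u) [Category.{v} K] [HasBinaryCoproducts K] where
  C : K ⥤ K
  γ : double K ⟶ C
  σ : C ⟶ 𝟭 K
  fac : ∀ X : K, γ.app X ≫ σ.app X = coprod.desc (𝟙 X) (𝟙 X)

namespace Cylinder
variable [HasBinaryCoproducts K] (cyl : Cylinder K)

/-- `γ⁰` -/
noncomputable def γ₀ : 𝟭 K ⟶ cyl.C where
  app X := coprod.inl ≫ cyl.γ.app X
  naturality X Y f := by
    have h := cyl.γ.naturality f
    dsimp [double] at h ⊢
    rw [Category.assoc, ← h, ← Category.assoc, ← Category.assoc, coprod.inl_map]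

/-- `γ¹` -/
noncomputable def γ₁ : 𝟭 K ⟶ cyl.C where
  app X := coprod.inr ≫ cyl.γ.app X
  naturality X Y f := by
    have h := cyl.γ.naturality f
    dsimp [double] at h ⊢
    rw [Category.assoc, ← h, ← Category.assoc, ← Category.assoc, coprod.inr_map]

/-- `(Cyl, γ, σ)` is a cylinder for a weak factorization system whose left class is `L`
if each `γ_X` lies in `L`. -/
def IsCylinderFor (L : MorphismProperty K) : Prop := ∀ X : K, L (cyl.γ.app X)

/-- the cylinder is final if each `σ_X` lies in `R`. -/
def IsFinal (R : MorphismProperty K) : Prop := ∀ X : K, R (cyl.σ.app X)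

end Cylinder

section Star
variable [HasPushouts K] {F F' : K ⥤ K}

/-- `f ⋆ α`: the induced map from the pushout of `F f` along `α_X` to `F' Y`. -/
noncomputable def starMap (α : F ⟶ F') {X Y : K} (f : X ⟶ Y) :
    pushout (F.map f) (α.app X) ⟶ F'.obj Y :=
  pushout.desc (α.app Y) (F'.map f) (α.naturality f)

/-- the class `L` is stable under `(−) ⋆ α`. -/
def StableUnderStar (L : MorphismProperty K) (α : F ⟶ F') : Prop :=
  ∀ ⦃X Y : K⦄ (f : X ⟶ Y), L f → L (starMap α f)

/-- the class `I ⋆ α = { f ⋆ α | f ∈ I }`. -/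
def starClass (α : F ⟶ F') (I : MorphismProperty K) : MorphismProperty K :=
  fun _ _ g => ∃ (X Y : K) (f : X ⟶ Y), I f ∧ Arrow.mk g = Arrow.mk (starMap α f)

end Star

/-- the cylinder is cartesian with respect to the left class `L`:
the cylinder functor is a left adjoint and `L` is stable under `⋆γ`, `⋆γ⁰` and `⋆γ¹`. -/
structure Cylinder.IsCartesian [HasBinaryCoproducts K] [HasPushouts K]
    (cyl : Cylinder K) (L : MorphismProperty K) : Prop where
  leftAdjoint : cyl.C.IsLeftAdjoint
  star_γ : StableUnderStar L cyl.γ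
  star_γ₀ : StableUnderStar L cyl.γ₀
  star_γ₁ : StableUnderStar L cyl.γ₁

section Lambda
variable [HasBinaryCoproducts K] [HasPushouts K]

/-- `Λⁿ(Cyl,S,I)` -/
noncomputable def LambdaN (cyl : Cylinder K) (S I : MorphismProperty K) :
    ℕ → MorphismProperty K
  | 0 => fun _ _ f => S f ∨ starClass cyl.γ₀ I f ∨ starClass cyl.γ₁ I f
  | n + 1 => starClass cyl.γ (LambdaN cyl S I n)

/-- `Λ(Cyl,S,I)` -/
noncomputable def Lambda (cyl : Cylinder K) (S I : MorphismProperty K) :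
    MorphismProperty K :=
  fun _ _ f => ∃ n : ℕ, LambdaN cyl S I n f

/-- `T` is fibrant if `T → 1` has the right lifting property against `Λ(Cyl,S,I)`. -/
noncomputable def Fibrant [HasTerminal K] (cyl : Cylinder K) (S I : MorphismProperty K)
    (T : K) : Prop :=
  Rlp (Lambda cyl S I) (terminal.from T)

end Lambda

/-- `f` and `g` are homotopic: `(f|g)` factors through `γ_X`. -/
def Htp [HasBinaryCoproducts K] (cyl : Cylinder K) {X Y : K} (f g : X ⟶ Y) : Prop :=
  ∃ h : cyl.C.obj X ⟶ Y, cyl.γ.app X ≫ h = coprod.desc f g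

/-- symmetric-transitive closure of a relation -/
inductive STClos {α : Sort*} (r : α → α → Prop) : α → α → Prop
  | base : ∀ {x y : α}, r x y → STClos r x y
  | symm : ∀ {x y : α}, STClos r x y → STClos r y x
  | trans : ∀ {x y z : α}, STClos r x y → STClos r y z → STClos r x z

/-- the homotopy equivalence relation `∼`, the symmetric-transitive closure of `≃`. -/
def HtpEq [HasBinaryCoproducts K] (cyl : Cylinder K) {X Y : K} : (X ⟶ Y) → (X ⟶ Y) → Prop :=
  STClos (Htp cyl)

/-- `W(Cyl,S,I)`: the maps `f : X ⟶ Y` such that for every fibrant `T` the induced map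
`Hom(Y,T)/∼ → Hom(X,T)/∼` is bijective (expressed elementwise). -/
noncomputable def Weq [HasBinaryCoproducts K] [HasPushouts K] [HasTerminal K]
    (cyl : Cylinder K) (S I : MorphismProperty K) : MorphismProperty K :=
  fun X Y f => ∀ T : K, Fibrant cyl S I T →
    (∀ t : X ⟶ T, ∃ u : Y ⟶ T, HtpEq cyl (f ≫ u) t) ∧
    (∀ u v : Y ⟶ T, HtpEq cyl (f ≫ u) (f ≫ v) → HtpEq cyl u v)

/-- pushout stability of a class of maps -/
def StableUnderPushout (L : MorphismProperty K) : Prop :=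
  ∀ ⦃A B A' B' : K⦄ ⦃f : A ⟶ B⦄ ⦃g : A ⟶ A'⦄ ⦃f' : A' ⟶ B'⦄ ⦃g' : B ⟶ B'⦄,
    IsPushout g f f' g' → L f → L f'

/-- closure under transfinite composition of smooth (colimit preserving) chains -/
def ClosedUnderTransfiniteComposition (L : MorphismProperty K) : Prop :=
  ∀ (o : Ordinal.{v}) (ho : (0 : Ordinal.{v}) < o)
    (D : (Set.Iio o : Set Ordinal.{v}) ⥤ K),
    Nonempty (PreservesColimits D) →
    (∀ (β : Ordinal.{v}) (hβ : β + 1 < o),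
      L (D.map (homOfLE (Subtype.mk_le_mk.mpr (le_self_add : β ≤ β + 1)) :
        (⟨β, lt_of_le_of_lt (le_self_add : β ≤ β + 1) hβ⟩ : (Set.Iio o : Set Ordinal.{v})) ⟶
        ⟨β + 1, hβ⟩))) →
    ∀ (c : Cocone D), IsColimit c → L (c.ι.app ⟨0, ho⟩)

/-- A localizer for the class `Cof`: a class `W` with the 2-out-of-3 property, containing
`Cof^□`, and whose intersection with `Cof` is closed under pushouts and transfinite
compositions. -/
structure IsLocalizer (Cof W : MorphismProperty K) : Prop where
  twoOutOfThree : TwoOutOfThree W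
  rlp_le : ∀ ⦃X Y : K⦄ (f : X ⟶ Y), Rlp Cof f → W f
  pushout : StableUnderPushout (interClass Cof W)
  transfinite : ClosedUnderTransfiniteComposition (interClass Cof W)

/-- `W(S)`: the smallest localizer for `Cof` containing `S` (the intersection of all of them). -/
def smallestLocalizer (Cof S : MorphismProperty K) : MorphismProperty K :=
  fun _ _ f => ∀ W : MorphismProperty K, IsLocalizer Cof W →
    (∀ ⦃A B : K⦄ (s : A ⟶ B), S s → W s) → W f

/-- the smallest class containing `S` which is a localizer for `Cof` and moreover closed
under retracts in the arrow category. -/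
def smallestRetractLocalizer (Cof S : MorphismProperty K) : MorphismProperty K :=
  fun _ _ f => ∀ W : MorphismProperty K, IsLocalizer Cof W → RetractClosed W →
    (∀ ⦃A B : K⦄ (s : A ⟶ B), S s → W s) → W f

/-- the empty class of maps -/
def emptyClass (K : Type u) [Category.{v} K] : MorphismProperty K := fun _ _ _ => False

/-- a preorder is `κ`-directed if every subset of cardinality `< κ` has an upper bound -/
def IsCardinalDirected (κ : Cardinal.{v}) (J : Type v) [Preorder J] : Prop :=
  ∀ S : Set J, Cardinal.mk S < κ → ∃ j : J, ∀ s ∈ S, s ≤ j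

/-- an object `X` is `κ`-presentable if `Hom(X,-)` preserves `κ`-directed colimits -/
def IsPresentableObj (κ : Cardinal.{v}) (X : K) : Prop :=
  ∀ (J : Type v) [Preorder J], IsCardinalDirected κ J →
    Nonempty (PreservesColimitsOfShape J (coyoneda.obj (op X)))

/-- `X` is a `κ`-directed colimit of objects from the set `A` -/
def IsDirectedColimitFrom (κ : Cardinal.{v}) (A : Set K) (X : K) : Prop :=
  ∃ (J : Type v) (pre : Preorder J),
    letI := pre
    IsCardinalDirected κ J ∧
      ∃ (D : J ⥤ K) (c : Cocone D), Nonempty (IsColimit c) ∧ c.pt = X ∧ ∀ j : J, D.obj j ∈ A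

/-- `κ`-accessible category -/
structure IsCardinalAccessible (κ : Cardinal.{v}) (K : Type u) [Category.{v} K] : Prop where
  isRegular : κ.IsRegular
  hasDirectedColimits :
    ∀ (J : Type v) [Preorder J], IsCardinalDirected κ J → HasColimitsOfShape J K
  generators : ∃ A : Set K, Small.{v} A ∧ (∀ X ∈ A, IsPresentableObj κ X) ∧
    ∀ X : K, IsDirectedColimitFrom κ A X

/-- accessible category -/
def IsAccessibleCat (K : Type u) [Category.{v} K] : Prop :=
  ∃ κ : Cardinal.{v}, IsCardinalAccessible κ K

/-- locally presentable category: accessible and cocomplete -/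
def IsLocallyPresentable (K : Type u) [Category.{v} K] : Prop :=
  IsAccessibleCat K ∧ HasColimits K

/-- `F` preserves `κ`-directed colimits -/
def PreservesCardinalDirectedColimits (κ : Cardinal.{v}) {A : Type u₁} [Category.{v} A]
    {C : Type u₂} [Category.{v} C] (F : A ⥤ C) : Prop :=
  ∀ (J : Type v) [Preorder J], IsCardinalDirected κ J →
    Nonempty (PreservesColimitsOfShape J F)

/-- accessible functor -/
def IsAccessibleFunctor {A : Type u₁} [Category.{v} A] {C : Type u₂} [Category.{v} C]
    (F : A ⥤ C) : Prop :=
  ∃ κ : Cardinal.{v}, IsCardinalAccessible κ A ∧ IsCardinalAccessible κ C ∧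
    PreservesCardinalDirectedColimits κ F

/-- dual strong deformation retract -/
def DualStrongDeformationRetract [HasBinaryCoproducts K] (cyl : Cylinder K)
    {X Y : K} (f : X ⟶ Y) : Prop :=
  ∃ (g : Y ⟶ X) (h : cyl.C.obj X ⟶ X),
    g ≫ f = 𝟙 Y ∧ cyl.γ₀.app X ≫ h = 𝟙 X ∧ cyl.γ₁.app X ≫ h = f ≫ g ∧
      h ≫ f = cyl.σ.app X ≫ f

/-- helper instance (Prop-valued): binary coproducts of sheaves of types, found directly
by sheafification; instance search times out on this in current Mathlib. -/
instance sheafHasBinaryCoproductsAux {C : Type v} [SmallCategory C] (J : GrothendieckTopology C) :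
    HasBinaryCoproducts (Sheaf J (Type v)) :=
  ⟨fun _ => HasColimit.mk
    ⟨Sheaf.sheafifyCocone (colimit.cocone _), Sheaf.isColimitSheafifyCocone _ (colimit.isColimit _)⟩⟩

/-!
Everything rests on adhesivity of the topos. If `Mono` is stable under `(−) ⋆ γ⁰`, then
`Cyl f` is the pushout of the mono `f` along `γ⁰_X` followed by `f ⋆ γ⁰`, hence monic.
Conversely, if `Cyl` preserves monos, the naturality square of `γ`, `γ⁰` or `γ¹` at a mono is a
pullback of monos, and in an adhesive category the map out of the pushout of such a square
(the union of two subobjects, Lack–Sobociński) is monic; that map is the `⋆`-product.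

For the adjointness half: a colimit-preserving `F` on sheaves gives the colimit-preserving
`F ∘ sheafification` on presheaves, a left adjoint. Its right adjoint takes values that are local
for the maps sheafification inverts, hence sheaves, so it restricts to a right adjoint of `F`.
-/

open MorphismProperty

attribute [local simp] coprod.inl_desc coprod.inr_desc pushout.inl_desc pushout.inr_desc
  pushout.inl_desc_assoc pushout.inr_desc_assoc

section Adhesive
variable {K : Type u} [Category.{v} K] [Adhesive K]

lemma mono_pushout_desc_of_isPullback {P A B Z : K} {p₁ : P ⟶ A} {p₂ : P ⟶ B} {a : A ⟶ Z}
    {b : B ⟶ Z} (h : IsPullback p₁ p₂ a b) [Mono a] [Mono b] [HasPushout p₁ p₂] :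
    Mono (pushout.desc a b h.w) := by
  have : pushout.desc a b h.w = pushout.map p₁ p₂ (pullback.fst a b) (pullback.snd a b)
      (𝟙 A) (𝟙 B) h.isoPullback.hom (by simp) (by simp) ≫
        pushout.desc a b pullback.condition := by
    ext <;> simp
  rw [this]
  infer_instance

/-- In an adhesive category the mono `F.map f` is the equalizer of its cokernel pair, here
`F.map inl, F.map inr`; a cone over the cospan factors through it since `α` is monic. -/
lemma isPullback_naturality_of_mono {F F' : K ⥤ K} (α : F ⟶ F') [∀ X, Mono (α.app X)]
    [F.PreservesMonomorphisms] [F'.PreservesMonomorphisms] {X Y : K} (f : X ⟶ Y) [Mono f]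
    (hF : IsPushout (F.map f) (F.map f) (F.map (pushout.inl f f)) (F.map (pushout.inr f f))) :
    IsPullback (F.map f) (α.app X) (α.app Y) (F'.map f) := by
  have hkernel := Adhesive.isPullback_of_isPushout_of_mono_left hF
  refine .mk' (α.naturality f) (fun T φ φ' h _ => (cancel_mono (F.map f)).mp h) ?_
  intro T a b hab
  have hequal : a ≫ F.map (pushout.inl f f) = a ≫ F.map (pushout.inr f f) := by
    rw [← cancel_mono (α.app _)]
    simp only [Category.assoc, α.naturality, reassoc_of% hab, ← F'.map_comp, pushout.condition]
  refine ⟨hkernel.lift a a hequal, hkernel.lift_fst _ _ _, ?_⟩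
  rw [← cancel_mono (F'.map f), Category.assoc, ← α.naturality, hkernel.lift_fst_assoc, hab]

variable [HasPushouts K] {F F' : K ⥤ K}

lemma Functor.preservesMonomorphisms_of_stableUnderStar (α : F ⟶ F')
    (hα : StableUnderStar (monomorphisms K) α) [F.PreservesMonomorphisms] :
    F'.PreservesMonomorphisms where
  preserves f _ := by
    have : Mono (pushout.inr (F.map f) (α.app _)) :=
      Adhesive.mono_of_isPushout_of_mono_left (IsPushout.of_hasPushout _ _)
    have : Mono (starMap α f) := hα f (monomorphisms.infer_property f)
    rw [← pushout.inr_desc (α.app _) (F'.map f) (α.naturality f)]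
    exact mono_comp _ (starMap α f)

lemma stableUnderStar_monomorphisms (α : F ⟶ F') [∀ X, Mono (α.app X)]
    [F.PreservesMonomorphisms] [F'.PreservesMonomorphisms]
    (hF : ∀ ⦃X Y : K⦄ (f : X ⟶ Y), Mono f →
      IsPushout (F.map f) (F.map f) (F.map (pushout.inl f f)) (F.map (pushout.inr f f))) :
    StableUnderStar (monomorphisms K) α := by
  intro X Y f (_ : Mono f)
  exact mono_pushout_desc_of_isPullback (isPullback_naturality_of_mono α f (hF f ‹_›))

end Adhesive

section Coproduct
variable {K : Type u} [Category.{v} K] [HasBinaryCoproducts K]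

lemma isPushout_coprod_map {W X Y Z : K} {f : W ⟶ X} {g : W ⟶ Y} {h : X ⟶ Z} {i : Y ⟶ Z}
    (H : IsPushout f g h i) :
    IsPushout (coprod.map f f) (coprod.map g g) (coprod.map h h) (coprod.map i i) := by
  refine .mk' (by ext <;> simp [H.w]) (fun T φ φ' hh hi => ?_) (fun T a b hab => ?_)
  · ext
    · exact H.hom_ext (by simpa using coprod.inl ≫= hh) (by simpa using coprod.inl ≫= hi)
    · exact H.hom_ext (by simpa using coprod.inr ≫= hh) (by simpa using coprod.inr ≫= hi)
  · refine ⟨coprod.desc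
      (H.desc (coprod.inl ≫ a) (coprod.inl ≫ b) (by simpa using coprod.inl ≫= hab))
      (H.desc (coprod.inr ≫ a) (coprod.inr ≫ b) (by simpa using coprod.inr ≫= hab)), ?_, ?_⟩
    all_goals ext <;> simp

lemma mono_coprod_map [Adhesive K] {A B X Y : K} (f : A ⟶ B) (g : X ⟶ Y) [Mono f] [Mono g] :
    Mono (coprod.map f g) := by
  have mono_map_id {P Q : K} (u : P ⟶ Q) [Mono u] (Z : K) : Mono (coprod.map u (𝟙 Z)) :=
    Adhesive.mono_of_isPushout_of_mono_right (IsPushout.of_coprod_inl_with_id u Z)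
  have := mono_map_id f X
  have := mono_map_id g B
  have : coprod.map f g = coprod.map f (𝟙 X) ≫ (coprod.braiding B X).hom ≫
      coprod.map g (𝟙 B) ≫ (coprod.braiding Y B).hom := by
    ext <;> simp
  rw [this]
  infer_instance

instance [Adhesive K] : (double K).PreservesMonomorphisms where
  preserves f _ := mono_coprod_map f f

end Coproduct

namespace Cylinder
variable {K : Type u} [Category.{v} K] [HasBinaryCoproducts K] (cyl : Cylinder K)

lemma γ₀_app_σ_app (X : K) : cyl.γ₀.app X ≫ cyl.σ.app X = 𝟙 X :=
  (Category.assoc _ _ _).trans ((coprod.inl ≫= cyl.fac X).trans (coprod.inl_desc _ _))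

lemma γ₁_app_σ_app (X : K) : cyl.γ₁.app X ≫ cyl.σ.app X = 𝟙 X :=
  (Category.assoc _ _ _).trans ((coprod.inr ≫= cyl.fac X).trans (coprod.inr_desc _ _))

instance (X : K) : IsSplitMono (cyl.γ₀.app X) := .mk' ⟨_, cyl.γ₀_app_σ_app X⟩

instance (X : K) : IsSplitMono (cyl.γ₁.app X) := .mk' ⟨_, cyl.γ₁_app_σ_app X⟩

theorem isCartesian_monomorphisms_iff [HasPushouts K] [Adhesive K]
    (hcyl : cyl.IsCylinderFor (monomorphisms K)) :
    cyl.IsCartesian (monomorphisms K) ↔ cyl.C.PreservesMonomorphisms ∧ cyl.C.IsLeftAdjoint := by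
  constructor
  · intro h
    exact ⟨Functor.preservesMonomorphisms_of_stableUnderStar cyl.γ₀ h.star_γ₀, h.leftAdjoint⟩
  · rintro ⟨_, hC⟩
    have : ∀ X, Mono (cyl.γ.app X) := hcyl
    exact ⟨hC,
      stableUnderStar_monomorphisms _ fun _ _ f _ => isPushout_coprod_map (.of_hasPushout f f),
      stableUnderStar_monomorphisms _ fun _ _ f _ => .of_hasPushout f f,
      stableUnderStar_monomorphisms _ fun _ _ f _ => .of_hasPushout f f⟩

end Cylinder

lemma isLocal_rightAdjoint_obj {A D : Type*} [Category A] [Category D]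
    (W : MorphismProperty A) {L : A ⥤ D} {R : D ⥤ A} (adj : L ⊣ R) (hL : W.IsInvertedBy L)
    (Y : D) : W.isLocal (R.obj Y) := by
  intro X X' f hf
  have : IsIso (L.map f) := hL f hf
  have hcomp : (fun g : X' ⟶ R.obj Y => f ≫ g) =
      adj.homEquiv _ _ ∘ (asIso (L.map f)).homFromEquiv.symm ∘ (adj.homEquiv _ _).symm := by
    funext g
    simp [adj.homEquiv_naturality_left]
  rw [hcomp]
  exact (adj.homEquiv _ _).bijective.comp ((Equiv.bijective _).comp (Equiv.bijective _))

section Sheaf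
variable {C : Type v} [SmallCategory C] (J : GrothendieckTopology C)

lemma Sheaf.hasColimits_type : HasColimits (Sheaf J (Type v)) :=
  ⟨fun _ _ => ⟨fun _ => HasColimit.mk ⟨Sheaf.sheafifyCocone (colimit.cocone _),
    Sheaf.isColimitSheafifyCocone _ (colimit.isColimit _)⟩⟩⟩

variable {J} in
lemma isIso_toSheafify_of_isLocal {P : Cᵒᵖ ⥤ Type v} (hP : J.W.isLocal P) :
    IsIso (toSheafify J P) :=
  (ObjectProperty.isLocal_iff_isIso _ _ hP
    (ObjectProperty.le_isLocal_isLocal _ _ ((presheafToSheaf J _).obj P).property)).mp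
    (MorphismProperty.le_isLocal_isLocal J.W _ (J.W_toSheafify P))

lemma Sheaf.isLeftAdjoint_of_preservesColimits (F : Sheaf J (Type v) ⥤ Sheaf J (Type v))
    [PreservesColimits F] : F.IsLeftAdjoint := by
  have := Sheaf.hasColimits_type J
  let L := presheafToSheaf J (Type v) ⋙ F
  have : L.IsLeftAdjoint := Presheaf.isLeftAdjoint_of_preservesColimits.{0} L
  let adj := Adjunction.ofIsLeftAdjoint L
  have (Y : Sheaf J (Type v)) :
      IsIso ((Functor.whiskerLeft L.rightAdjoint (sheafificationAdjunction J _).unit).app Y) := by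
    rw [Functor.whiskerLeft_app, sheafificationAdjunction_unit_app]
    exact isIso_toSheafify_of_isLocal (isLocal_rightAdjoint_obj J.W adj
      (.of_comp _ _ (Localization.inverts _ J.W) F) Y)
  have := NatIso.isIso_of_isIso_app
    (Functor.whiskerLeft L.rightAdjoint (sheafificationAdjunction J _).unit)
  exact (adj.restrictFullyFaithful (iD := 𝟭 _) (fullyFaithfulSheafToPresheaf J _)
    (Functor.FullyFaithful.id _) (L := F) (R := L.rightAdjoint ⋙ presheafToSheaf J _)
    (Functor.associator _ _ _ ≪≫
      Functor.isoWhiskerRight (asIso (sheafificationAdjunction J _).counit) F)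
    (asIso (Functor.whiskerLeft L.rightAdjoint (sheafificationAdjunction J _).unit))).isLeftAdjoint

lemma Sheaf.isLeftAdjoint_iff_preservesColimits (F : Sheaf J (Type v) ⥤ Sheaf J (Type v)) :
    F.IsLeftAdjoint ↔ Nonempty (PreservesColimits F) :=
  ⟨fun _ => ⟨inferInstance⟩, fun ⟨_⟩ => Sheaf.isLeftAdjoint_of_preservesColimits J F⟩

end Sheaf

/-- in a Grothendieck topos (presented as the category of sheaves on a
small site), a functorial cylinder for `(Mono, Mono^□)` is cartesian if and only if it
satisfies DH1: the cylinder functor preserves monomorphisms and all colimits. -/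
theorem statement3 {C : Type v} [SmallCategory C] (J : GrothendieckTopology C)
    (cyl : Cylinder (Sheaf J (Type v)))
    (hcyl : cyl.IsCylinderFor (MorphismProperty.monomorphisms (Sheaf J (Type v)))) :
    cyl.IsCartesian (MorphismProperty.monomorphisms (Sheaf J (Type v))) ↔
      ((∀ ⦃X Y : Sheaf J (Type v)⦄ (f : X ⟶ Y), Mono f → Mono (cyl.C.map f)) ∧
        Nonempty (PreservesColimits cyl.C)) := by
  rw [cyl.isCartesian_monomorphisms_iff hcyl, Sheaf.isLeftAdjoint_iff_preservesColimits]
  exact and_congr_left' ⟨fun _ _ _ f _ => cyl.C.map_mono f, fun h => ⟨fun f _ => h f ‹_›⟩⟩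

end Paper
end

section
/- Let E be a Grothendieck topos and (Cyl, γ, σ) a cylinder for the weak factorization system (Mono, Mono^□). Then DH1 implies DH2, and DH2 implies DH3, where: DH1 says Cyl preserves monomorphisms and all colimits; DH2 says for every monomorphism f: X → Y and k = 0,1 the square with top γ^k_X: X → Cyl X, left f, right Cyl f, bottom γ^k_Y: Y → Cyl Y is a pullback; DH3 says for every monomorphism f: X → Y the square with top γ_X: X + X → Cyl X, left f + f, right Cyl f, bottom γ_Y: Y + Y → Cyl Y is a pullback. -/
/-!
Common definitions: weak factorization systems, functorial cylinders,
Cisinski's construction, localizers, locally presentable categories.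
-/

universe w v u u₁ u₂ u₃

open CategoryTheory Limits Opposite

namespace Paper

variable {K : Type u} [Category.{v} K]

/-- binary coproducts of sheaves of types (instance search times out otherwise) -/
instance sheafTypeHasBinaryCoproducts {C : Type v} [SmallCategory C]
    (J : GrothendieckTopology C) :
    HasColimitsOfShape (Discrete WalkingPair) (Sheaf J (Type v)) :=
  Sheaf.instHasColimitsOfShape

/-!
DH1 ⇒ DH2: in a topos every monomorphism `f : X ⟶ Y` is regular, the equalizer of some pair
`Y ⇉ Z`. If `δ : 𝟭 ⟶ Cyl` is monic at `Z`, naturality of `δ` shows that any cone over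
`Cyl f` and `δ_Y` has its `Y`-leg equalizing that pair, hence factoring through `f`; that
the factorization is compatible with the `Cyl X`-leg follows by cancelling the mono `Cyl f`.

DH2 ⇒ DH3: `γ_X` is the copairing of `γ⁰_X` and `γ¹_X`, and since coproducts in a topos are
universal, the coproduct of two pullback squares sharing their right leg is a pullback.
-/

section Pullbacks

variable {E : Type u} [Category.{v} E]

lemma isPullback_naturality_of_regularMono {F : E ⥤ E} (δ : 𝟭 E ⟶ F) {X Y : E} {f : X ⟶ Y}
    (hf : RegularMono f) [Mono (δ.app hf.Z)] [Mono (F.map f)] :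
    IsPullback (δ.app X) f (F.map f) (δ.app Y) := by
  have := hf.mono
  have w : δ.app X ≫ F.map f = f ≫ δ.app Y := (δ.naturality f).symm
  have equalizes (s : PullbackCone (F.map f) (δ.app Y)) :
      s.snd ≫ hf.left = s.snd ≫ hf.right := by
    have transport (g : Y ⟶ hf.Z) : s.snd ≫ g ≫ δ.app hf.Z = s.fst ≫ F.map (f ≫ g) := by
      rw [Functor.map_comp, s.condition_assoc]
      exact congrArg (s.snd ≫ ·) (δ.naturality g)
    rw [← cancel_mono (δ.app hf.Z), Category.assoc, Category.assoc, transport, transport, hf.w]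
  have lift_comp (s : PullbackCone (F.map f) (δ.app Y)) :
      Fork.IsLimit.lift hf.isLimit s.snd (equalizes s) ≫ f = s.snd :=
    Fork.IsLimit.lift_ι' hf.isLimit s.snd (equalizes s)
  refine IsPullback.of_isLimit (PullbackCone.IsLimit.mk w
    (fun s => Fork.IsLimit.lift hf.isLimit s.snd (equalizes s)) (fun s => ?_) lift_comp
    (fun s m _ hm => ?_))
  · rw [← cancel_mono (F.map f), Category.assoc, w, ← Category.assoc, lift_comp, s.condition]
  · rw [← cancel_mono f, hm, lift_comp]

lemma isPullback_coprod_desc [FinitaryPreExtensive E] [HasPullbacks E]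
    {X₀ X₁ Y₀ Y₁ P S : E} {a₀ : X₀ ⟶ P} {a₁ : X₁ ⟶ P} {f₀ : X₀ ⟶ Y₀} {f₁ : X₁ ⟶ Y₁}
    {g : P ⟶ S} {b₀ : Y₀ ⟶ S} {b₁ : Y₁ ⟶ S}
    (h₀ : IsPullback a₀ f₀ g b₀) (h₁ : IsPullback a₁ f₁ g b₁) :
    IsPullback (coprod.desc a₀ a₁) (coprod.map f₀ f₁) g (coprod.desc b₀ b₁) := by
  let a : (j : WalkingPair) → pairFunction X₀ X₁ j ⟶ P
    | .left => a₀
    | .right => a₁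
  let q : (j : WalkingPair) → pairFunction X₀ X₁ j ⟶ pairFunction Y₀ Y₁ j
    | .left => f₀
    | .right => f₁
  have universal := FinitaryPreExtensive.universal' _ (coprodIsCoprod Y₀ Y₁)
  have h := universal.isPullback_of_isColimit_left (X := pairFunction Y₀ Y₁)
    (fun | .left => b₀ | .right => b₁) (coprod.desc b₀ b₁) g a q
    (fun | .left => h₀ | .right => h₁) (coprodIsCoprod X₀ X₁)
    (by rintro (_ | _); exacts [coprod.inl_desc _ _, coprod.inr_desc _ _])
  have desc_eq : Cofan.IsColimit.desc (coprodIsCoprod X₀ X₁) a = coprod.desc a₀ a₁ :=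
    coprod.hom_ext
      ((Cofan.IsColimit.fac (coprodIsCoprod X₀ X₁) _ .left).trans (coprod.inl_desc _ _).symm)
      ((Cofan.IsColimit.fac (coprodIsCoprod X₀ X₁) _ .right).trans (coprod.inr_desc _ _).symm)
  have map_eq : Cofan.IsColimit.desc (coprodIsCoprod X₀ X₁)
      (fun j => q j ≫ Cofan.inj (BinaryCofan.mk (coprod.inl : Y₀ ⟶ _) coprod.inr) j) =
        coprod.map f₀ f₁ :=
    coprod.hom_ext
      ((Cofan.IsColimit.fac (coprodIsCoprod X₀ X₁) _ .left).trans (coprod.inl_map _ _).symm)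
      ((Cofan.IsColimit.fac (coprodIsCoprod X₀ X₁) _ .right).trans (coprod.inr_map _ _).symm)
  exact desc_eq ▸ map_eq ▸ h

end Pullbacks

namespace Cylinder

variable {E : Type u} [Category.{v} E] [HasBinaryCoproducts E] (cyl : Cylinder E)

lemma γ_app_eq_desc (X : E) : cyl.γ.app X = coprod.desc (cyl.γ₀.app X) (cyl.γ₁.app X) :=
  coprod.hom_ext (coprod.inl_desc _ _).symm (coprod.inr_desc _ _).symm

lemma mono_γ₀_app [MonoCoprod E] {X : E} (h : Mono (cyl.γ.app X)) : Mono (cyl.γ₀.app X) :=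
  mono_comp' inferInstance h

lemma mono_γ₁_app [MonoCoprod E] {X : E} (h : Mono (cyl.γ.app X)) : Mono (cyl.γ₁.app X) :=
  mono_comp' inferInstance h

lemma isPullback_γ_app [FinitaryPreExtensive E] [HasPullbacks E] {X Y : E} {f : X ⟶ Y}
    (h₀ : IsPullback (cyl.γ₀.app X) f (cyl.C.map f) (cyl.γ₀.app Y))
    (h₁ : IsPullback (cyl.γ₁.app X) f (cyl.C.map f) (cyl.γ₁.app Y)) :
    IsPullback (cyl.γ.app X) ((double E).map f) (cyl.C.map f) (cyl.γ.app Y) := by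
  rw [cyl.γ_app_eq_desc X, cyl.γ_app_eq_desc Y]
  exact isPullback_coprod_desc h₀ h₁

end Cylinder

/-- in a Grothendieck topos, for a cylinder for `(Mono, Mono^□)`:
DH1 implies DH2, and DH2 implies DH3. -/
theorem statement4 {C : Type v} [SmallCategory C] (J : GrothendieckTopology C)
    (cyl : Cylinder (Sheaf J (Type v)))
    (hcyl : cyl.IsCylinderFor (MorphismProperty.monomorphisms (Sheaf J (Type v)))) :
    -- DH1 → DH2
    ((((∀ ⦃X Y : Sheaf J (Type v)⦄ (f : X ⟶ Y), Mono f → Mono (cyl.C.map f)) ∧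
        Nonempty (PreservesColimits cyl.C)) →
      (∀ ⦃X Y : Sheaf J (Type v)⦄ (f : X ⟶ Y), Mono f →
        (IsPullback (cyl.γ₀.app X) f (cyl.C.map f) (cyl.γ₀.app Y) ∧
         IsPullback (cyl.γ₁.app X) f (cyl.C.map f) (cyl.γ₁.app Y)))) ∧
    -- DH2 → DH3
     ((∀ ⦃X Y : Sheaf J (Type v)⦄ (f : X ⟶ Y), Mono f →
        (IsPullback (cyl.γ₀.app X) f (cyl.C.map f) (cyl.γ₀.app Y) ∧
         IsPullback (cyl.γ₁.app X) f (cyl.C.map f) (cyl.γ₁.app Y))) →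
      (∀ ⦃X Y : Sheaf J (Type v)⦄ (f : X ⟶ Y), Mono f →
        IsPullback (cyl.γ.app X) ((double (Sheaf J (Type v))).map f)
          (cyl.C.map f) (cyl.γ.app Y)))) := by
  refine ⟨fun ⟨map_mono, _⟩ X Y f hf => ?_, fun dh2 X Y f hf => ?_⟩
  · have : Mono (cyl.C.map f) := map_mono f hf
    let hreg := regularMonoOfMono f
    have := cyl.mono_γ₀_app (hcyl hreg.Z)
    have := cyl.mono_γ₁_app (hcyl hreg.Z)
    exact ⟨isPullback_naturality_of_regularMono cyl.γ₀ hreg,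
      isPullback_naturality_of_regularMono cyl.γ₁ hreg⟩
  · exact cyl.isPullback_γ_app (dh2 f hf).1 (dh2 f hf).2

end Paper
end

section
/- Let R be a ring, V an R-R-bimodule and v: R → V a map of R-R-bimodules. Define, for each left R-module M, Cyl_v(M) = M ⊕ (V ⊗_R M), with γ⁰_M: M → Cyl_v(M) the first inclusion, γ¹_M = (id_M, v ⊗ id_M): M → Cyl_v(M), γ_M = (γ⁰_M | γ¹_M): M ⊕ M → Cyl_v(M), and σ_M: Cyl_v(M) → M the first projection. Then (Cyl_v, γ, σ) is a cylinder for the weak factorization system (Mono, Mono^□) on the category of left R-modules if and only if v is a pure monomorphism of right R-modules. Moreover, in that case two maps f, g: M → N are homotopic if and only if g − f factors through the map v ⊗ id_M: M → V ⊗_R M. -/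
/-!
Only the shape of `γ_M` matters: up to the shear `(a, b) ↦ (a + b, b)` of `M ⊕ M` it is
`id_M ⊕ φ` with `φ = v ⊗ id_M`, so it is injective exactly when `φ` is, and a map
`h = (h₀ | h₁)` out of `M ⊕ P` restricts along it to `(h₀ | h₀ + h₁ ∘ φ)`.
-/

universe u
open scoped TensorProduct
open MulOpposite
namespace Paper

variable (R V : Type u) [Ring R] [AddCommGroup V] [Module R V] [Module Rᵐᵒᵖ V]
  [SMulCommClass R Rᵐᵒᵖ V]

/-- relators defining `V ⊗_R M` as a quotient of `V ⊗_ℤ M` -/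
def relators (M : Type u) [AddCommGroup M] [Module R M] :
    Submodule R (TensorProduct ℤ V M) :=
  Submodule.span R
    { t | ∃ (w : V) (r : R) (m : M), t = (op r • w) ⊗ₜ[ℤ] m - w ⊗ₜ[ℤ] (r • m) }

/-- the tensor product `V ⊗_R M` of the right module `V` with the left module `M` -/
abbrev NTensor (M : Type u) [AddCommGroup M] [Module R M] : Type u :=
  TensorProduct ℤ V M ⧸ relators R V M

/-- the map `M ≅ R ⊗_R M → V ⊗_R M` induced by `v : R → V` -/
noncomputable def vMap (v : R →ₗ[R] V) (hv : ∀ x s : R, v (x * s) = op s • v x)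
    (M : Type u) [AddCommGroup M] [Module R M] : M →ₗ[R] NTensor R V M where
  toFun m := Submodule.Quotient.mk ((v 1) ⊗ₜ[ℤ] m)
  map_add' m m' := by (try simp only []); rw [TensorProduct.tmul_add, Submodule.Quotient.mk_add]
  map_smul' r m := by
    simp only [RingHom.id_apply]
    have key : r • v 1 = op r • v 1 := by
      rw [← map_smul v r 1, smul_eq_mul, mul_one, ← hv 1 r, one_mul]
    rw [← Submodule.Quotient.mk_smul, TensorProduct.smul_tmul', key]
    refine (Submodule.Quotient.eq _).mpr ?_
    have hgen : ((op r • v 1) ⊗ₜ[ℤ] m - (v 1) ⊗ₜ[ℤ] (r • m)) ∈ relators R V M :=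
      Submodule.subset_span ⟨v 1, r, m, rfl⟩
    have h := neg_mem hgen
    rwa [neg_sub] at h

/-- `γ_M : M ⊕ M → Cyl_v M = M ⊕ (V ⊗_R M)` -/
noncomputable def cylGamma (v : R →ₗ[R] V) (hv : ∀ x s : R, v (x * s) = op s • v x)
    (M : Type u) [AddCommGroup M] [Module R M] :
    (M × M) →ₗ[R] M × NTensor R V M :=
  LinearMap.prod (LinearMap.fst R M M + LinearMap.snd R M M)
    ((vMap R V v hv M).comp (LinearMap.snd R M M))

section CylinderInclusion

variable {R : Type*} [Semiring R] {M N P : Type*}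
  [AddCommGroup M] [Module R M] [AddCommGroup N] [Module R N] [AddCommGroup P] [Module R P]

def cylinderInclusion (φ : M →ₗ[R] P) : M × M →ₗ[R] M × P :=
  LinearMap.prod (LinearMap.fst R M M + LinearMap.snd R M M) (φ.comp (LinearMap.snd R M M))

@[simp]
theorem cylinderInclusion_apply (φ : M →ₗ[R] P) (a b : M) :
    cylinderInclusion φ (a, b) = (a + b, φ b) :=
  rfl

theorem cylinderInclusion_injective_iff (φ : M →ₗ[R] P) :
    Function.Injective (cylinderInclusion φ) ↔ Function.Injective φ := by
  simp only [injective_iff_map_eq_zero]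
  constructor
  · intro hγ m hm
    have h : cylinderInclusion φ (-m, m) = 0 := by
      rw [cylinderInclusion_apply, hm, neg_add_cancel, Prod.mk_zero_zero]
    exact congrArg Prod.snd (hγ _ h)
  · rintro hφ ⟨a, b⟩ hab
    rw [cylinderInclusion_apply, Prod.mk_eq_zero] at hab
    obtain ⟨hsum, hb⟩ := hab
    obtain rfl : b = 0 := hφ b hb
    obtain rfl : a = 0 := by rwa [add_zero] at hsum
    rfl

theorem exists_comp_cylinderInclusion_eq_coprod_iff (φ : M →ₗ[R] P) (f g : M →ₗ[R] N) :
    (∃ h : M × P →ₗ[R] N, h.comp (cylinderInclusion φ) = LinearMap.coprod f g) ↔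
      ∃ k : P →ₗ[R] N, k.comp φ = g - f := by
  constructor
  · rintro ⟨h, hh⟩
    refine ⟨h.comp (LinearMap.inr R M P), LinearMap.ext fun m => ?_⟩
    have hg : h (m, φ m) = g m := by simpa using LinearMap.congr_fun hh (0, m)
    have hf : h (m, 0) = f m := by simpa using LinearMap.congr_fun hh (m, 0)
    calc h (0, φ m) = h ((m, φ m) - (m, 0)) := by rw [Prod.mk_sub_mk, sub_self, sub_zero]
      _ = (g - f) m := by rw [map_sub, hg, hf, LinearMap.sub_apply]
  · rintro ⟨k, hk⟩
    refine ⟨f.comp (LinearMap.fst R M P) + k.comp (LinearMap.snd R M P),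
      LinearMap.ext fun ⟨a, b⟩ => ?_⟩
    have hkb : k (φ b) = g b - f b := LinearMap.congr_fun hk b
    simp [hkb]

end CylinderInclusion

/-- `(Cyl_v, γ, σ)` with `Cyl_v(M) = M ⊕ (V ⊗_R M)` is a cylinder for
`(Mono, Mono^□)` on left `R`-modules (i.e. each `γ_M` is injective; the factorization
`σ_M ∘ γ_M = codiagonal` holds by construction) if and only if `v` is a pure
monomorphism of right `R`-modules (i.e. `v ⊗_R M : M ≅ R ⊗_R M → V ⊗_R M` is injective
for every left module `M`).  Moreover, in that case two maps `f, g : M → N` are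
homotopic (the map `(f|g) : M ⊕ M → N` factors through `γ_M`) if and only if `g - f`
factors through `v ⊗ id_M : M → V ⊗_R M`. -/
theorem statement5 (R V : Type u) [Ring R] [AddCommGroup V] [Module R V] [Module Rᵐᵒᵖ V]
    [SMulCommClass R Rᵐᵒᵖ V] (v : R →ₗ[R] V)
    (hv : ∀ x s : R, v (x * s) = op s • v x) :
    ((∀ (M : Type u) [AddCommGroup M] [Module R M],
        Function.Injective (cylGamma R V v hv M)) ↔
      (∀ (M : Type u) [AddCommGroup M] [Module R M],
        Function.Injective (vMap R V v hv M))) ∧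
    ((∀ (M : Type u) [AddCommGroup M] [Module R M],
        Function.Injective (vMap R V v hv M)) →
      ∀ (M N : Type u) [AddCommGroup M] [Module R M] [AddCommGroup N] [Module R N]
        (f g : M →ₗ[R] N),
        ((∃ h : (M × NTensor R V M) →ₗ[R] N,
            h.comp (cylGamma R V v hv M) = LinearMap.coprod f g) ↔
          (∃ k : NTensor R V M →ₗ[R] N, k.comp (vMap R V v hv M) = g - f))) := by
  exact ⟨forall_congr' fun M => forall_congr' fun _ => forall_congr' fun _ =>
      cylinderInclusion_injective_iff (vMap R V v hv M),
    fun _ M _ _ _ _ _ f g => exists_comp_cylinderInclusion_eq_coprod_iff (vMap R V v hv M) f g⟩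

end Paper
end

section
/- Let K be a locally presentable category, (C, C^□) a cofibrant weak factorization system generated by a set I ⊆ C, (Cyl, γ, σ) a cartesian cylinder for (C, C^□), and S ⊆ C a subset, with Λ = Λ(Cyl,S,I). Then □(Λ^□) ⊆ W(Cyl,S,I). -/
/-!
The path object `P T` of a fibrant `T` (with `P` right adjoint to the cylinder) comes with
an end-point map `P T ⟶ T × T`, the transpose of `γ`. Since `Λ ⋆ γ ⊆ Λ`, fibrancy of `T` makes
this map lie in `Λ^□`, so a map `f ∈ □(Λ^□)` lifts against it: a homotopy between `f ≫ u` and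
`f ≫ v` lifts to one between `u` and `v`. Lifting `f` against `T ⟶ 1` shows that every map
`X ⟶ T` extends along `f`; together these give bijectivity on homotopy classes.

The product `T × T` exists because `K` is locally presentable: the colimit of all spans
`T₁ ⟵ a ⟶ T₂` with `a` a generator is weakly terminal among spans, and coequalizing all of its
endomorphisms turns it into a terminal span, i.e. a product (the dual of Freyd's construction).
-/

universe w v u u₁ u₂ u₃

open CategoryTheory Limits Opposite

namespace Paper

variable {K : Type u} [Category.{v} K]

lemma hasBinaryProduct_of_weaklyTerminal [HasWideCoequalizers.{v} K] {T₁ T₂ Q : K}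
    (q₁ : Q ⟶ T₁) (q₂ : Q ⟶ T₂)
    (hQ : ∀ ⦃X : K⦄ (u : X ⟶ T₁) (v : X ⟶ T₂), ∃ q : X ⟶ Q, q ≫ q₁ = u ∧ q ≫ q₂ = v) :
    HasBinaryProduct T₁ T₂ := by
  let J := {m : Q ⟶ Q // m ≫ q₁ = q₁ ∧ m ≫ q₂ = q₂}
  have : Nonempty J := ⟨⟨𝟙 Q, Category.id_comp _, Category.id_comp _⟩⟩
  let e : J → (Q ⟶ Q) := Subtype.val
  let π := wideCoequalizer.π e
  have hJ : ∀ m : J, m.1 ≫ π = π := fun m =>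
    (wideCoequalizer.condition e m ⟨𝟙 Q, Category.id_comp _, Category.id_comp _⟩).trans
      (Category.id_comp _)
  let p₁ : wideCoequalizer e ⟶ T₁ :=
    wideCoequalizer.desc q₁ fun m m' => m.2.1.trans m'.2.1.symm
  let p₂ : wideCoequalizer e ⟶ T₂ :=
    wideCoequalizer.desc q₂ fun m m' => m.2.2.trans m'.2.2.symm
  have hp₁ : π ≫ p₁ = q₁ := wideCoequalizer.π_desc _ _
  have hp₂ : π ≫ p₂ = q₂ := wideCoequalizer.π_desc _ _
  have hom_ext : ∀ ⦃B : K⦄ (m m' : B ⟶ wideCoequalizer e),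
      m ≫ p₁ = m' ≫ p₁ → m ≫ p₂ = m' ≫ p₂ → m = m' := by
    intro B m m' h₁ h₂
    obtain ⟨t, ht₁, ht₂⟩ := hQ (coequalizer.desc p₁ h₁) (coequalizer.desc p₂ h₂)
    have hsection : coequalizer.π m m' ≫ t ≫ π = 𝟙 _ := by
      refine (cancel_epi π).1 ?_
      -- `π ≫ coequalizer.π m m' ≫ t` is an endomorphism of the span `Q`, hence coequalized
      -- with `𝟙`
      simpa using hJ ⟨π ≫ coequalizer.π m m' ≫ t, by simp [ht₁, hp₁], by simp [ht₂, hp₂]⟩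
    rw [← Category.comp_id m, ← Category.comp_id m', ← hsection, coequalizer.condition_assoc]
  refine ⟨⟨⟨BinaryFan.mk p₁ p₂, BinaryFan.IsLimit.mk _
    (fun u v => (hQ u v).choose ≫ π) (fun u v => ?_) (fun u v => ?_)
    (fun u v m h₁ h₂ => hom_ext _ _ ?_ ?_)⟩⟩⟩
  · simp [hp₁, (hQ u v).choose_spec.1]
  · simp [hp₂, (hQ u v).choose_spec.2]
  · simpa [hp₁, (hQ u v).choose_spec.1] using h₁
  · simpa [hp₂, (hQ u v).choose_spec.2] using h₂

structure GenSpan (A : Set K) (T₁ T₂ : K) : Type max u v where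
  pt : K
  mem : pt ∈ A
  fst : pt ⟶ T₁
  snd : pt ⟶ T₂

namespace GenSpan

variable (A : Set K) (T₁ T₂ : K)

instance : Category.{v} (GenSpan A T₁ T₂) where
  Hom s t := {g : s.pt ⟶ t.pt // g ≫ t.fst = s.fst ∧ g ≫ t.snd = s.snd}
  id _ := ⟨𝟙 _, Category.id_comp _, Category.id_comp _⟩
  comp f g := ⟨f.1 ≫ g.1, by simp [g.2.1, f.2.1], by simp [g.2.2, f.2.2]⟩

@[simps]
def forget : GenSpan A T₁ T₂ ⥤ K where
  obj s := s.pt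
  map g := g.1

def equivSigma : GenSpan A T₁ T₂ ≃ Σ a : A, ((a : K) ⟶ T₁) × ((a : K) ⟶ T₂) where
  toFun s := ⟨⟨s.pt, s.mem⟩, s.fst, s.snd⟩
  invFun p := ⟨p.1, p.1.2, p.2.1, p.2.2⟩
  left_inv _ := rfl
  right_inv _ := rfl

instance [Small.{v} A] : Small.{v} (GenSpan A T₁ T₂) :=
  small_map (equivSigma A T₁ T₂)

instance [Small.{v} A] [HasColimits K] : HasColimitsOfShape (GenSpan A T₁ T₂) K :=
  have : EssentiallySmall.{v} (GenSpan A T₁ T₂) := essentiallySmall_of_small_of_locallySmall _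
  hasColimitsOfShape_of_equivalence (equivSmallModel (GenSpan A T₁ T₂)).symm

@[simps]
def coconeFst : Cocone (forget A T₁ T₂) where
  pt := T₁
  ι := { app := fun s => s.fst, naturality := fun _ _ g => g.2.1.trans (Category.comp_id _).symm }

@[simps]
def coconeSnd : Cocone (forget A T₁ T₂) where
  pt := T₂
  ι := { app := fun s => s.snd, naturality := fun _ _ g => g.2.2.trans (Category.comp_id _).symm }

lemma exists_factor_through_colimit [Small.{v} A] [HasColimits K] {κ : Cardinal.{v}}
    (hA : ∀ X : K, IsDirectedColimitFrom κ A X) {X : K} (u : X ⟶ T₁) (v : X ⟶ T₂) :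
    ∃ q : X ⟶ colimit (forget A T₁ T₂),
      q ≫ colimit.desc _ (coconeFst A T₁ T₂) = u ∧ q ≫ colimit.desc _ (coconeSnd A T₁ T₂) = v := by
  obtain ⟨J, _, -, D, c, ⟨hc⟩, rfl, hD⟩ := hA X
  let span (j : J) : GenSpan A T₁ T₂ := ⟨D.obj j, hD j, c.ι.app j ≫ u, c.ι.app j ≫ v⟩
  let toColimit : Cocone D :=
    { pt := colimit (forget A T₁ T₂)
      ι := { app := fun j => colimit.ι (forget A T₁ T₂) (span j)
             naturality := fun j j' g =>
               (colimit.w (forget A T₁ T₂)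
                 (⟨D.map g, by simp [span], by simp [span]⟩ : span j ⟶ span j')).trans
                 (Category.comp_id _).symm } }
  refine ⟨hc.desc toColimit, hc.hom_ext fun j => ?_, hc.hom_ext fun j => ?_⟩
  · exact (hc.fac_assoc _ _ _).trans (colimit.ι_desc _ _)
  · exact (hc.fac_assoc _ _ _).trans (colimit.ι_desc _ _)

end GenSpan

theorem hasBinaryProducts_of_isDirectedColimitFrom [HasColimits K] {κ : Cardinal.{v}}
    {A : Set K} [Small.{v} A] (hA : ∀ X : K, IsDirectedColimitFrom κ A X) :
    HasBinaryProducts K :=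
  have (T₁ T₂ : K) : HasBinaryProduct T₁ T₂ := hasBinaryProduct_of_weaklyTerminal _ _
    fun _ => GenSpan.exists_factor_through_colimit A T₁ T₂ hA
  hasBinaryProducts_of_hasLimit_pair K

lemma STClos.of_map {α β : Sort*} {r : α → α → Prop} {s : β → β → Prop} {φ : α → β}
    (hφ : Function.Surjective φ) (hsr : ∀ a b, s (φ a) (φ b) → r a b) {a b : α}
    (hab : STClos s (φ a) (φ b)) : STClos r a b := by
  suffices ∀ x y, STClos s x y → ∀ a b, φ a = x → φ b = y → STClos r a b from
    this _ _ hab a b rfl rfl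
  intro x y hxy
  induction hxy with
  | base h => rintro a b rfl rfl; exact .base (hsr a b h)
  | symm _ ih => exact fun a b ha hb => .symm (ih b a hb ha)
  | trans _ _ ih₁ ih₂ =>
    intro a c ha hc
    obtain ⟨b, hb⟩ := hφ _
    exact .trans (ih₁ a b ha hb) (ih₂ b c hb hc)

lemma exists_extension_along_starMap [HasPushouts K] [HasTerminal K] {F F' : K ⥤ K}
    (α : F ⟶ F') {A B T : K} (h : A ⟶ B) [HasLiftingProperty (starMap α h) (terminal.from T)]
    (g : F.obj B ⟶ T) (k : F'.obj A ⟶ T) (w : F.map h ≫ g = α.app A ≫ k) :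
    ∃ ℓ : F'.obj B ⟶ T, α.app B ≫ ℓ = g ∧ F'.map h ≫ ℓ = k := by
  have sq : CommSq (pushout.desc g k w) (starMap α h) (terminal.from T) (terminal.from _) :=
    ⟨terminal.hom_ext _ _⟩
  refine ⟨sq.lift, ?_, ?_⟩
  · simpa only [starMap, pushout.inl_desc, pushout.inl_desc_assoc] using
      pushout.inl _ _ ≫= sq.fac_left
  · simpa only [starMap, pushout.inr_desc, pushout.inr_desc_assoc] using
      pushout.inr _ _ ≫= sq.fac_left

section Homotopy

variable [HasBinaryCoproducts K] {cyl : Cylinder K}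

lemma Cylinder.γ_app_comp_eq_desc_iff {X T : K} {H : cyl.C.obj X ⟶ T} {u v : X ⟶ T} :
    cyl.γ.app X ≫ H = coprod.desc u v ↔ cyl.γ₀.app X ≫ H = u ∧ cyl.γ₁.app X ≫ H = v := by
  refine ⟨fun h => ⟨?_, ?_⟩, fun ⟨h₀, h₁⟩ => coprod.hom_ext ?_ ?_⟩
  · exact (Category.assoc _ _ _).trans ((coprod.inl ≫= h).trans (coprod.inl_desc _ _))
  · exact (Category.assoc _ _ _).trans ((coprod.inr ≫= h).trans (coprod.inr_desc _ _))
  · exact (Category.assoc _ _ _).symm.trans (h₀.trans (coprod.inl_desc _ _).symm)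
  · exact (Category.assoc _ _ _).symm.trans (h₁.trans (coprod.inr_desc _ _).symm)

lemma Htp.refl {X T : K} (g : X ⟶ T) : Htp cyl g g :=
  ⟨cyl.σ.app X ≫ g, by
    rw [← Category.assoc, cyl.fac]
    exact (coprod.desc_comp _ _ _).trans (by simp)⟩

section PathObject

variable {P : K ⥤ K} (adj : cyl.C ⊣ P)

noncomputable def pathEnds (T : K) [HasBinaryProduct T T] : P.obj T ⟶ T ⨯ T :=
  prod.lift (cyl.γ₀.app _ ≫ adj.counit.app T) (cyl.γ₁.app _ ≫ adj.counit.app T)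

lemma comp_pathEnds_fst {B T : K} [HasBinaryProduct T T] (m : B ⟶ P.obj T) :
    m ≫ pathEnds adj T ≫ prod.fst = cyl.γ₀.app B ≫ (adj.homEquiv B T).symm m := by
  rw [pathEnds, prod.lift_fst, Adjunction.homEquiv_counit]
  exact cyl.γ₀.naturality_assoc m _

lemma comp_pathEnds_snd {B T : K} [HasBinaryProduct T T] (m : B ⟶ P.obj T) :
    m ≫ pathEnds adj T ≫ prod.snd = cyl.γ₁.app B ≫ (adj.homEquiv B T).symm m := by
  rw [pathEnds, prod.lift_snd, Adjunction.homEquiv_counit]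
  exact cyl.γ₁.naturality_assoc m _

end PathObject

variable [HasPushouts K] [HasTerminal K] {S I : MorphismProperty K}

lemma rlp_pathEnds [HasBinaryProducts K] {P : K ⥤ K} (adj : cyl.C ⊣ P) {T : K} (hT : Fibrant cyl S I T) : Rlp (Lambda cyl S I) (pathEnds adj T) := by
  rintro A B h ⟨n, hn⟩
  have : HasLiftingProperty (starMap cyl.γ h) (terminal.from T) := hT _ ⟨n + 1, _, _, h, hn, rfl⟩
  refine ⟨fun {a b} sq => ?_⟩
  have h₀ : cyl.γ₀.app A ≫ (adj.homEquiv _ _).symm a = h ≫ b ≫ prod.fst := by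
    rw [← comp_pathEnds_fst, reassoc_of% sq.w]
  have h₁ : cyl.γ₁.app A ≫ (adj.homEquiv _ _).symm a = h ≫ b ≫ prod.snd := by
    rw [← comp_pathEnds_snd, reassoc_of% sq.w]
  obtain ⟨ℓ, hγ, hC⟩ := exists_extension_along_starMap cyl.γ h
    (coprod.desc (b ≫ prod.fst) (b ≫ prod.snd)) ((adj.homEquiv _ _).symm a)
    ((coprod.map_desc _ _ _ _).trans (Cylinder.γ_app_comp_eq_desc_iff.2 ⟨h₀, h₁⟩).symm)
  obtain ⟨hℓ₀, hℓ₁⟩ := Cylinder.γ_app_comp_eq_desc_iff.1 hγ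
  refine ⟨⟨⟨adj.homEquiv _ _ ℓ, ?_, ?_⟩⟩⟩
  · rw [← adj.homEquiv_naturality_left, hC, Equiv.apply_symm_apply]
  · apply prod.hom_ext
    · rw [Category.assoc, comp_pathEnds_fst, Equiv.symm_apply_apply, hℓ₀]
    · rw [Category.assoc, comp_pathEnds_snd, Equiv.symm_apply_apply, hℓ₁]

variable {X Y T : K} {f : X ⟶ Y}

lemma exists_comp_eq_of_llp_rlp_lambda (hf : Llp (Rlp (Lambda cyl S I)) f)
    (hT : Fibrant cyl S I T) (t : X ⟶ T) : ∃ u : Y ⟶ T, f ≫ u = t :=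
  have : HasLiftingProperty f (terminal.from T) := hf _ hT
  have sq : CommSq t f (terminal.from T) (terminal.from Y) := ⟨terminal.hom_ext _ _⟩
  ⟨sq.lift, sq.fac_left⟩

lemma Htp.of_llp_rlp_lambda [HasBinaryProducts K] [cyl.C.IsLeftAdjoint]
    (hf : Llp (Rlp (Lambda cyl S I)) f) (hT : Fibrant cyl S I T) {u v : Y ⟶ T}
    (huv : Htp cyl (f ≫ u) (f ≫ v)) : Htp cyl u v := by
  obtain ⟨H, hH⟩ := huv
  obtain ⟨hH₀, hH₁⟩ := Cylinder.γ_app_comp_eq_desc_iff.1 hH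
  let adj := Adjunction.ofIsLeftAdjoint cyl.C
  have : HasLiftingProperty f (pathEnds adj T) := hf _ (rlp_pathEnds adj hT)
  have sq : CommSq (adj.homEquiv _ _ H) f (pathEnds adj T) (prod.lift u v) := ⟨by
    apply prod.hom_ext
    · rw [Category.assoc, Category.assoc, prod.lift_fst, comp_pathEnds_fst,
        Equiv.symm_apply_apply, hH₀]
    · rw [Category.assoc, Category.assoc, prod.lift_snd, comp_pathEnds_snd,
        Equiv.symm_apply_apply, hH₁]⟩
  refine ⟨(adj.homEquiv _ _).symm sq.lift, Cylinder.γ_app_comp_eq_desc_iff.2 ⟨?_, ?_⟩⟩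
  · rw [← comp_pathEnds_fst, sq.fac_right_assoc, prod.lift_fst]
  · rw [← comp_pathEnds_snd, sq.fac_right_assoc, prod.lift_snd]

end Homotopy

theorem statement17_general {K : Type u} [Category.{v} K]
    [HasTerminal K] [HasBinaryCoproducts K] [HasPushouts K]
    (hK : IsLocallyPresentable K)
    (Cof : MorphismProperty K)
    (I : MorphismProperty K)
    (cyl : Cylinder K) (hcart : cyl.IsCartesian Cof)
    (S : MorphismProperty K) :
    ∀ ⦃X Y : K⦄ (f : X ⟶ Y), Llp (Rlp (Lambda cyl S I)) f → Weq cyl S I f := by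
  obtain ⟨⟨κ, hκ⟩, _⟩ := hK
  obtain ⟨A, _, -, hA⟩ := hκ.generators
  have := hasBinaryProducts_of_isDirectedColimitFrom hA
  have := hcart.leftAdjoint
  intro X Y f hf T hT
  have hsurj := exists_comp_eq_of_llp_rlp_lambda hf hT
  refine ⟨fun t => ?_, fun u v huv => ?_⟩
  · obtain ⟨u, rfl⟩ := hsurj t
    exact ⟨u, .base (Htp.refl _)⟩
  · exact STClos.of_map hsurj (fun _ _ => Htp.of_llp_rlp_lambda hf hT) huv

/-- Lemma: `□(Λ^□) ⊆ W(Cyl,S,I)`. -/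
theorem statement17 {K : Type u} [Category.{v} K]
    [HasInitial K] [HasTerminal K] [HasBinaryCoproducts K] [HasPushouts K]
    (hK : IsLocallyPresentable K)
    (Cof : MorphismProperty K) (hwfs : IsWFS Cof (Rlp Cof))
    (I : MorphismProperty K) (hIset : IsSmallClass I)
    (hIL : ∀ ⦃X Y : K⦄ (f : X ⟶ Y), I f → Cof f) (hgen : Cof = Llp (Rlp I))
    (hcof : AllCofibrant Cof)
    (cyl : Cylinder K) (hcyl : cyl.IsCylinderFor Cof) (hcart : cyl.IsCartesian Cof)
    (S : MorphismProperty K) (hS : ∀ ⦃X Y : K⦄ (f : X ⟶ Y), S f → Cof f) :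
    ∀ ⦃X Y : K⦄ (f : X ⟶ Y), Llp (Rlp (Lambda cyl S I)) f → Weq cyl S I f :=
  statement17_general hK Cof I cyl hcart S

end Paper
end
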